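/- Let q ≥ 0 be an integer, p = 2q + 1, and ε ∈ [0, 2/(5p)]. Define x* : {0,…,p} → ℝ by x*(0) = 0, x*(h) = 2/5 + ε for every odd h ∈ {1,…,p}, and x*(h) = −2/5 + ε for every even h ∈ {2,…,p−1}. Then x* is feasible for (p, 2/5 + ε) and x* is the unique minimizer of cost over trajectories feasible for (p, 2/5 + ε). -/
import Mathlib


/-- A trajectory `x : ℕ → ℝ` is feasible for `(p, z)` if `x 0 = 0`, `x p = z`,
`x t ∈ [-1,1]` for all `t ≤ p`, and `|x (t+1) - x t| ≤ 4/5` for all `t < p`. -/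
def Feasible (p : ℕ) (z : ℝ) (x : ℕ → ℝ) : Prop :=
  x 0 = 0 ∧ x p = z ∧ (∀ t ≤ p, x t ∈ Set.Icc (-1 : ℝ) 1) ∧
    ∀ t < p, |x (t + 1) - x t| ≤ 4 / 5

/-- `ξ t = 4/5` if `t` is odd and `-4/5` if `t` is even. -/
noncomputable def xiTgt (t : ℕ) : ℝ := if Odd t then 4 / 5 else -(4 / 5)

/-- The cost of a trajectory: `∑_{t=0}^{p} (x t - ξ t)^2`. -/
noncomputable def cost (p : ℕ) (x : ℕ → ℝ) : ℝ :=
  ∑ t ∈ Finset.range (p + 1), (x t - xiTgt t) ^ 2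


/-- The candidate optimal trajectory: `x* 0 = 0`, `x* h = 2/5 + ε` for odd `h`,
and `x* h = -2/5 + ε` for even `h ≥ 2`. -/
noncomputable def xstarF (ε : ℝ) (h : ℕ) : ℝ :=
  if h = 0 then 0 else if Odd h then 2 / 5 + ε else -(2 / 5) + ε

lemma xstarF_zero (ε : ℝ) : xstarF ε 0 = 0 := by simp [xstarF]
lemma xstarF_odd (ε : ℝ) (n : ℕ) : xstarF ε (2*n+1) = 2/5 + ε := by
  rw [xstarF, if_neg (by omega), if_pos ⟨n, rfl⟩]
lemma xstarF_even (ε : ℝ) (n : ℕ) (hn : n ≠ 0) : xstarF ε (2*n) = -(2/5) + ε := by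
  rw [xstarF, if_neg (by omega), if_neg (by rintro ⟨m, hm⟩; omega)]
lemma xiTgt_odd (n : ℕ) : xiTgt (2*n+1) = 4/5 := by
  rw [xiTgt, if_pos ⟨n, rfl⟩]
lemma xiTgt_even (n : ℕ) : xiTgt (2*n) = -(4/5) := by
  rw [xiTgt, if_neg (by rintro ⟨m, hm⟩; omega)]
lemma key_ineq (q : ℕ) (ε : ℝ) (hε0 : 0 ≤ ε) (hεu : ε * (5*(2*(q:ℝ)+1)) ≤ 2)
    (y : ℕ → ℝ) (hy : Feasible (2*q+1) (2/5+ε) y) :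
    ∀ n, n ≤ q → 2*(n:ℝ)*ε * (y (2*n) - xstarF ε (2*n)) ≤
      ∑ t ∈ Finset.range (2*n+1), (y t - xstarF ε t) * (xstarF ε t - xiTgt t) := by
  obtain ⟨hy0, hyp, hbd, hstep⟩ := hy
  intro n
  induction n with
  | zero => intro _; simp [hy0, xstarF]
  | succ n ih =>
    intro hn
    have ihv := ih (by omega)
    have e1 : 2*(n+1)+1 = (2*n+1)+1+1 := by ring
    have e2 : 2*n+1+1 = 2*(n+1) := by ring
    rw [e1, Finset.sum_range_succ, Finset.sum_range_succ, e2,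
      xstarF_odd, xiTgt_odd, show (2*(n+1) : ℕ) = 2*(n+1) from rfl,
      xstarF_even ε (n+1) (by omega), show (2*(n+1) : ℕ) = 2*(n+1)*1 from by ring]
    rw [show (2*(n+1)*1 : ℕ) = 2*(n+1) from by ring, xiTgt_even]
    -- step constraint at t = 2n+1 (odd): y(2n+2) - y(2n+1) ≥ -4/5
    have hs1 := hstep (2*n+1) (by omega)
    rw [abs_le] at hs1
    have hbc : y (2*n+1) - (2/5+ε) ≤ y (2*(n+1)) - (-(2/5)+ε) := by
      have := hs1.1
      have e3 : 2*n+1+1 = 2*(n+1) := by ring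
      rw [e3] at this
      linarith
    -- bound (2n+1)ε ≤ 2/5
    have h25 : (2*(n:ℝ)+1) * ε ≤ 2/5 := by
      have hc : (2*(n:ℝ)+1) ≤ 2*(q:ℝ)+1 := by
        have : (n:ℝ) + 1 ≤ (q:ℝ) := by exact_mod_cast hn
        linarith
      nlinarith
    push_cast
    rcases Nat.eq_zero_or_pos n with rfl | hpos
    · simp only [Nat.cast_zero] at ihv ⊢
      have h0 : y 0 = 0 := hy0
      nlinarith [mul_nonneg (show (0:ℝ) ≤ 2/5 - ε by nlinarith)
        (sub_nonneg.2 hbc), ihv]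
    · -- step constraint at t = 2n (even ≥ 2): y(2n+1) - y(2n) ≤ 4/5
      have hs0 := hstep (2*n) (by omega)
      rw [abs_le] at hs0
      have hab : y (2*n+1) - (2/5+ε) ≤ y (2*n) - (-(2/5)+ε) := by
        have := hs0.2; linarith
      rw [xstarF_even ε n (by omega)] at ihv
      nlinarith [ihv,
        mul_nonneg (mul_nonneg (show (0:ℝ) ≤ 2*(n:ℝ) by positivity) hε0)
          (sub_nonneg.2 hab),
        mul_nonneg (show (0:ℝ) ≤ 2/5 - (2*(n:ℝ)+1)*ε by linarith)
          (sub_nonneg.2 hbc)]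

theorem stmt_7 (q : ℕ) (ε : ℝ)
    (hε : ε ∈ Set.Icc (0 : ℝ) (2 / (5 * (2 * (q : ℝ) + 1)))) :
    Feasible (2 * q + 1) (2 / 5 + ε) (xstarF ε) ∧
    (∀ y, Feasible (2 * q + 1) (2 / 5 + ε) y →
      cost (2 * q + 1) (xstarF ε) ≤ cost (2 * q + 1) y) ∧
    ∀ y, Feasible (2 * q + 1) (2 / 5 + ε) y → (∃ t ≤ 2 * q + 1, y t ≠ xstarF ε t) →
      cost (2 * q + 1) (xstarF ε) < cost (2 * q + 1) y := by
  obtain ⟨hε0, hεub⟩ := hε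
  have hqpos : (0:ℝ) < 5*(2*(q:ℝ)+1) := by positivity
  have hεu : ε * (5*(2*(q:ℝ)+1)) ≤ 2 := by
    rw [le_div_iff₀ hqpos] at hεub
    · linarith [hεub]
  have hε25 : ε ≤ 2/5 := by nlinarith [Nat.cast_nonneg (α := ℝ) q]
  -- feasibility of xstarF
  have hfeas : Feasible (2 * q + 1) (2 / 5 + ε) (xstarF ε) := by
    refine ⟨xstarF_zero ε, xstarF_odd ε q, ?_, ?_⟩
    · intro t ht
      rcases Nat.even_or_odd t with he | ho
      · rcases Nat.eq_zero_or_pos t with rfl | hp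
        · simp [xstarF_zero]
        · obtain ⟨m, hm⟩ := he
          have : t = 2*m := by omega
          subst this
          rw [xstarF_even ε m (by omega)]
          constructor <;> linarith
      · obtain ⟨m, rfl⟩ := ho
        rw [xstarF_odd]
        constructor <;> linarith
    · intro t ht
      rcases Nat.even_or_odd t with he | ho
      · rcases Nat.eq_zero_or_pos t with rfl | hp
        · rw [show (0:ℕ)+1 = 2*0+1 from rfl, xstarF_odd, xstarF_zero, abs_le]
          constructor <;> linarith
        · obtain ⟨m, hm⟩ := he
          have : t = 2*m := by omega
          subst this
          rw [show 2*m+1 = 2*m+1 from rfl, xstarF_odd, xstarF_even ε m (by omega), abs_le]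
          constructor <;> norm_num
      · obtain ⟨m, rfl⟩ := ho
        rw [show 2*m+1+1 = 2*(m+1) from by ring, xstarF_even ε (m+1) (by omega),
          xstarF_odd, abs_le]
        constructor <;> norm_num
  refine ⟨hfeas, ?_, ?_⟩
  all_goals {
    intro y hy
    have hL : 0 ≤ ∑ t ∈ Finset.range (2*q+1+1),
        (y t - xstarF ε t) * (xstarF ε t - xiTgt t) := by
      rw [Finset.sum_range_succ]
      have hylast : y (2*q+1) = 2/5 + ε := hy.2.1
      have hzero : (y (2*q+1) - xstarF ε (2*q+1)) * (xstarF ε (2*q+1) - xiTgt (2*q+1)) = 0 := by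
        rw [hylast, xstarF_odd]; ring
      rw [hzero, add_zero]
      have hkey := key_ineq q ε hε0 hεu y hy q le_rfl
      rcases Nat.eq_zero_or_pos q with rfl | hq
      · simpa [hy.1, xstarF_zero] using hkey
      · -- d(2q) ≥ 0 : from step constraint at t = 2q and y(2q+1)=x*(2q+1)
        have hs := hy.2.2.2 (2*q) (by omega)
        rw [abs_le] at hs
        have hd : 0 ≤ y (2*q) - xstarF ε (2*q) := by
          rw [xstarF_even ε q (by omega)]
          have := hs.2
          rw [hylast] at this
          linarith
        refine le_trans ?_ hkey
        exact mul_nonneg (by positivity) hd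
    have hcost : cost (2*q+1) y = cost (2*q+1) (xstarF ε)
        + ∑ t ∈ Finset.range (2*q+1+1), (y t - xstarF ε t)^2
        + 2 * ∑ t ∈ Finset.range (2*q+1+1), (y t - xstarF ε t) * (xstarF ε t - xiTgt t) := by
      unfold cost
      rw [Finset.mul_sum, ← Finset.sum_add_distrib, ← Finset.sum_add_distrib]
      exact Finset.sum_congr rfl (fun t _ => by ring)
    have hsq : 0 ≤ ∑ t ∈ Finset.range (2*q+1+1), (y t - xstarF ε t)^2 :=
      Finset.sum_nonneg (fun t _ => sq_nonneg _)
    first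
    | linarith [hcost, hsq, hL]
    | · rintro ⟨t, ht, hne⟩
        have hpos : 0 < ∑ t ∈ Finset.range (2*q+1+1), (y t - xstarF ε t)^2 := by
          apply Finset.sum_pos' (fun i _ => sq_nonneg _)
          exact ⟨t, Finset.mem_range.2 (by omega), (lt_of_le_of_ne (sq_nonneg _) (Ne.symm (pow_ne_zero 2 (sub_ne_zero.2 hne))))⟩
        linarith [hcost, hpos, hL]
  }
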